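/- Let G be a bidirected signed graph carrying a nonzero integer flow that is positive on every edge of its support G₁, and suppose G₁ contains no consistently directed balanced circuit. Then G₁ contains a consistently directed unbalanced bicircuit: two edge-disjoint unbalanced circuits together with a (possibly trivial) connecting path, consistently directed at all vertices except the two endpoints of the connecting path on their circuits. -/

import Mathlib

/-! ## Signed graphs, bidirected orientations, flows, circuits -/

/-- A signed graph on vertex type `V` and edge type `E`: each edge has two
half-edges (indexed by `Bool`), each with an endpoint, and a sign
(`true` = positive, `false` = negative). -/
structure SignedGraph (V E : Type) where
  ends : E → Bool → V
  sign : E → Bool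

variable {V E : Type}

/-- A bidirected orientation: `dir e i = true` means the half-edge `i` of `e`
is directed *toward* its endpoint.  Positive edges have one half in, one half
out; negative edges have both halves directed the same way. -/
structure SOrientation (G : SignedGraph V E) where
  dir : E → Bool → Bool
  compat : ∀ e, G.sign e = xor (dir e false) (dir e true)

/-- Reverse the orientation on the set of edges where `s e = true`. -/
def SOrientation.reorient {G : SignedGraph V E} (O : SOrientation G) (s : E → Bool) :
    SOrientation G where
  dir := fun e i => xor (s e) (O.dir e i)
  compat := by
    intro e
    have h := O.compat e
    cases hs : s e <;> simp [hs, h]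

/-- Kirchhoff's law: at every vertex the sum of the values on incoming
half-edges equals the sum on outgoing half-edges. -/
def IsFlow [Fintype E] [DecidableEq V] {G : SignedGraph V E} {A : Type} [AddCommGroup A]
    (O : SOrientation G) (f : E → A) : Prop :=
  ∀ v : V,
    (∑ e : E, ∑ i : Bool, if G.ends e i = v ∧ O.dir e i = true then f e else 0)
      = ∑ e : E, ∑ i : Bool, if G.ends e i = v ∧ O.dir e i = false then f e else 0

/-- `G` admits a nowhere-zero integer flow (is flow-admissible). -/
def HasNZFlow [Fintype E] [DecidableEq V] (G : SignedGraph V E) : Prop :=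
  ∃ (O : SOrientation G) (φ : E → ℤ), IsFlow O φ ∧ ∀ e, φ e ≠ 0

/-- `G` admits a nowhere-zero `k`-flow: an integer flow with values in
`{±1, …, ±(k-1)}`. -/
def HasNZkFlow [Fintype E] [DecidableEq V] (G : SignedGraph V E) (k : ℕ) : Prop :=
  ∃ (O : SOrientation G) (φ : E → ℤ), IsFlow O φ ∧ ∀ e, φ e ≠ 0 ∧ (φ e).natAbs ≤ k - 1

/-- A circuit of length `n+1` in `G`: pairwise distinct vertices
`vtx 0, …, vtx n` and pairwise distinct edges, where edge `i` joins `vtx i`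
(via its half `half i`) to `vtx (i+1)` (via the other half); indices cyclic. -/
structure Circuit (G : SignedGraph V E) where
  n : ℕ
  vtx : Fin (n + 1) → V
  edge : Fin (n + 1) → E
  half : Fin (n + 1) → Bool
  vtx_inj : Function.Injective vtx
  edge_inj : Function.Injective edge
  ends_src : ∀ i, G.ends (edge i) (half i) = vtx i
  ends_tgt : ∀ i, G.ends (edge i) (!(half i)) = vtx (i + 1)

/-- Number of edges of a circuit. -/
def Circuit.length {G : SignedGraph V E} (C : Circuit G) : ℕ := C.n + 1

/-- A circuit is balanced if it has an even number of negative edges. -/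
def Circuit.Balanced {G : SignedGraph V E} (C : Circuit G) : Prop :=
  Even (Finset.univ.filter (fun i => G.sign (C.edge i) = false)).card

/-- Consistency of a (raw) bidirection `d` at the vertex `vtx (i+1)` of a
circuit: exactly one of the two half-edges of the circuit at that vertex is
directed toward it. -/
def Circuit.ConsistentAt {G : SignedGraph V E} (C : Circuit G)
    (d : E → Bool → Bool) (i : Fin (C.n + 1)) : Prop :=
  d (C.edge i) (!(C.half i)) ≠ d (C.edge (i + 1)) (C.half (i + 1))

/-- A path of length `m` (possibly trivial, `m = 0`) in `G`. -/
structure GPath (G : SignedGraph V E) where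
  m : ℕ
  vtx : Fin (m + 1) → V
  edge : Fin m → E
  half : Fin m → Bool
  vtx_inj : Function.Injective vtx
  edge_inj : Function.Injective edge
  ends_src : ∀ i, G.ends (edge i) (half i) = vtx i.castSucc
  ends_tgt : ∀ i, G.ends (edge i) (!(half i)) = vtx i.succ

/-- A path is consistently directed (w.r.t. a raw bidirection `d`) if it is
consistent at every internal vertex. -/
def GPath.ConsDir {G : SignedGraph V E} (P : GPath G) (d : E → Bool → Bool) : Prop :=
  ∀ a b : Fin P.m, (a : ℕ) + 1 = (b : ℕ) →
    d (P.edge a) (!(P.half a)) ≠ d (P.edge b) (P.half b)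

/-- A trail of length `m`: distinct edges, vertices may repeat. -/
structure Trail (G : SignedGraph V E) where
  m : ℕ
  vtx : Fin (m + 1) → V
  edge : Fin m → E
  half : Fin m → Bool
  edge_inj : Function.Injective edge
  ends_src : ∀ i, G.ends (edge i) (half i) = vtx i.castSucc
  ends_tgt : ∀ i, G.ends (edge i) (!(half i)) = vtx i.succ

/-- A signed circuit: either a balanced circuit, or an unbalanced bicircuit,
i.e. two unbalanced circuits joined by a (possibly trivial) connecting path
which meets the circuits only at its ends; if the path is trivial the two
circuits share exactly one vertex, otherwise they are vertex-disjoint. -/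
inductive SignedCircuit (G : SignedGraph V E) where
  | balanced (C : Circuit G) (hb : C.Balanced)
  | bicircuit (C₁ C₂ : Circuit G) (P : GPath G)
      (h₁ : ¬ C₁.Balanced) (h₂ : ¬ C₂.Balanced)
      (hstart : P.vtx 0 ∈ Set.range C₁.vtx)
      (hend : P.vtx (Fin.last P.m) ∈ Set.range C₂.vtx)
      (hmeet : ∀ x, x ∈ Set.range C₁.vtx → x ∈ Set.range C₂.vtx →
        P.m = 0 ∧ x = P.vtx 0)
      (hpathint : ∀ k : Fin (P.m + 1), k ≠ 0 → k ≠ Fin.last P.m →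
        P.vtx k ∉ Set.range C₁.vtx ∧ P.vtx k ∉ Set.range C₂.vtx)
      (hedisj : ∀ a b, C₁.edge a ≠ C₂.edge b)
      (hpe₁ : ∀ a b, P.edge a ≠ C₁.edge b)
      (hpe₂ : ∀ a b, P.edge a ≠ C₂.edge b)

namespace SignedCircuit

variable {G : SignedGraph V E}

/-- The edge set of a signed circuit. -/
def edges : SignedCircuit G → Set E
  | balanced C _ => Set.range C.edge
  | bicircuit C₁ C₂ P _ _ _ _ _ _ _ _ _ =>
      Set.range C₁.edge ∪ Set.range C₂.edge ∪ Set.range P.edge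

/-- The vertex set of a signed circuit. -/
def vertices : SignedCircuit G → Set V
  | balanced C _ => Set.range C.vtx
  | bicircuit C₁ C₂ P _ _ _ _ _ _ _ _ _ =>
      Set.range C₁.vtx ∪ Set.range C₂.vtx ∪ Set.range P.vtx

/-- The number of edges (total length) of a signed circuit. -/
def length : SignedCircuit G → ℕ
  | balanced C _ => C.length
  | bicircuit C₁ C₂ P _ _ _ _ _ _ _ _ _ => C₁.length + C₂.length + P.m

/-- Whether a signed circuit is an unbalanced bicircuit. -/
def IsBicircuit : SignedCircuit G → Prop
  | balanced _ _ => False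
  | bicircuit _ _ _ _ _ _ _ _ _ _ _ _ => True

/-- The length of the connecting path (`0` for a balanced circuit). -/
def pathLength : SignedCircuit G → ℕ
  | balanced _ _ => 0
  | bicircuit _ _ P _ _ _ _ _ _ _ _ _ => P.m

open Classical in
/-- The characteristic flow of a signed circuit: `1` on a balanced circuit;
`1` on the connecting path and `1/2` on the two circuits of an unbalanced
bicircuit; `0` elsewhere. -/
noncomputable def chi : SignedCircuit G → E → ℚ
  | balanced C _ => fun e => if e ∈ Set.range C.edge then 1 else 0
  | bicircuit C₁ C₂ P _ _ _ _ _ _ _ _ _ => fun e =>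
      if e ∈ Set.range P.edge then 1
      else if e ∈ Set.range C₁.edge ∪ Set.range C₂.edge then 1/2 else 0

/-- A signed circuit is consistently directed w.r.t. the raw bidirection `d`
if every pair of adjacent edges in it is consistently directed, except at the
faulty vertices: a balanced circuit is consistent everywhere; in an unbalanced
bicircuit each constituent circuit fails to be consistent exactly at the
end-vertex of the connecting path lying on it, while the path itself, and the
junctions of the path (resp. of the other circuit, if the path is trivial)
with the circuits, are consistent. -/
def ConsistentlyDirected (d : E → Bool → Bool) : SignedCircuit G → Prop
  | balanced C _ => ∀ i, C.ConsistentAt d i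
  | bicircuit C₁ C₂ P _ _ _ _ _ _ _ _ _ =>
      (∀ i, C₁.vtx (i + 1) ≠ P.vtx 0 → C₁.ConsistentAt d i) ∧
      (∀ i, C₁.vtx (i + 1) = P.vtx 0 → ¬ C₁.ConsistentAt d i) ∧
      (∀ i, C₂.vtx (i + 1) ≠ P.vtx (Fin.last P.m) → C₂.ConsistentAt d i) ∧
      (∀ i, C₂.vtx (i + 1) = P.vtx (Fin.last P.m) → ¬ C₂.ConsistentAt d i) ∧
      P.ConsDir d ∧
      (∀ k : Fin P.m, (k : ℕ) = 0 → ∀ j, C₁.vtx (j + 1) = P.vtx 0 →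
        d (P.edge k) (P.half k) ≠ d (C₁.edge j) (!(C₁.half j))) ∧
      (∀ k : Fin P.m, (k : ℕ) + 1 = P.m → ∀ j, C₂.vtx (j + 1) = P.vtx (Fin.last P.m) →
        d (P.edge k) (!(P.half k)) ≠ d (C₂.edge j) (!(C₂.half j))) ∧
      (P.m = 0 → ∀ j₁ j₂, C₁.vtx (j₁ + 1) = P.vtx 0 → C₂.vtx (j₂ + 1) = P.vtx 0 →
        d (C₁.edge j₁) (!(C₁.half j₁)) ≠ d (C₂.edge j₂) (!(C₂.half j₂)))

end SignedCircuit

/-- Switching a signed graph at a vertex `v`: the signs of all non-loop edges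
incident with `v` are negated (endpoints are unchanged). -/
def SignedGraph.switch [DecidableEq V] (G : SignedGraph V E) (v : V) : SignedGraph V E where
  ends := G.ends
  sign := fun e =>
    if (G.ends e false = v ∨ G.ends e true = v) ∧ G.ends e false ≠ G.ends e true
    then !(G.sign e) else G.sign e

/-- A circuit of `G` is also a circuit of the switched graph. -/
def Circuit.ofSwitch [DecidableEq V] {G : SignedGraph V E} (v : V) (C : Circuit G) :
    Circuit (G.switch v) :=
  ⟨C.n, C.vtx, C.edge, C.half, C.vtx_inj, C.edge_inj, C.ends_src, C.ends_tgt⟩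


/-! ### Auxiliary machinery for the main theorem -/

section Aux

variable {V E : Type}

instance {G : SignedGraph V E} (C : Circuit G) (d : E → Bool → Bool) (i : Fin (C.n + 1)) :
    Decidable (C.ConsistentAt d i) := by
  unfold Circuit.ConsistentAt; infer_instance

lemma bool_not_inj {a b : Bool} (h : (!a) = (!b)) : a = b := by
  cases a <;> cases b <;> simp_all

lemma bool_eq_not_of_ne {a b : Bool} (h : a ≠ b) : a = !b := by
  cases a <;> cases b <;> simp_all

lemma SOrientation.dir_not {G : SignedGraph V E} (O : SOrientation G) (e : E) (i : Bool) :
    O.dir e (!i) = xor (G.sign e) (O.dir e i) := by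
  rw [O.compat e]
  cases i <;> cases h1 : O.dir e false <;> cases h2 : O.dir e true <;> simp [h1, h2]

open Finset in
lemma Circuit.parity {G : SignedGraph V E} (O : SOrientation G) (C : Circuit G) :
    (((Finset.univ.filter (fun i => G.sign (C.edge i) = false)).card : ZMod 2)) =
      (∑ i : Fin (C.n+1), if C.ConsistentAt O.dir i then (1 : ZMod 2) else 0)
        + ((C.n + 1 : ℕ) : ZMod 2) := by
  have key : ∀ i : Fin (C.n+1),
      ((if G.sign (C.edge i) = false then (1:ZMod 2) else 0))
        = (if C.ConsistentAt O.dir i then (1:ZMod 2) else 0)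
          + ((if O.dir (C.edge i) (C.half i) then (1:ZMod 2) else 0)
          + ((if O.dir (C.edge (i+1)) (C.half (i+1)) then (1:ZMod 2) else 0) + 1)) := by
    intro i
    simp only [Circuit.ConsistentAt, O.dir_not]
    cases hs : G.sign (C.edge i) <;> cases hx : O.dir (C.edge i) (C.half i) <;>
      cases hy : O.dir (C.edge (i+1)) (C.half (i+1)) <;> simp [hs, hx, hy] <;> decide
  have h1 : (((Finset.univ.filter (fun i => G.sign (C.edge i) = false)).card : ZMod 2)) =
      ∑ i : Fin (C.n+1), (if G.sign (C.edge i) = false then (1:ZMod 2) else 0) := by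
    rw [Finset.card_filter, Nat.cast_sum]
    exact Finset.sum_congr rfl (fun i _ => by split <;> simp)
  rw [h1]
  rw [Finset.sum_congr rfl (fun i _ => key i)]
  rw [Finset.sum_add_distrib, Finset.sum_add_distrib, Finset.sum_add_distrib]
  have h2 : (∑ i : Fin (C.n+1), if O.dir (C.edge (i+1)) (C.half (i+1)) then (1:ZMod 2) else 0)
      = ∑ i : Fin (C.n+1), if O.dir (C.edge i) (C.half i) then (1:ZMod 2) else 0 := by
    exact Fintype.sum_equiv (Equiv.addRight 1)
      (fun i => if O.dir (C.edge (i+1)) (C.half (i+1)) then (1:ZMod 2) else 0)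
      (fun i => if O.dir (C.edge i) (C.half i) then (1:ZMod 2) else 0) (fun i => rfl)
  have h4 : (∑ _i : Fin (C.n+1), (1:ZMod 2)) = ((C.n + 1 : ℕ) : ZMod 2) := by
    simp [Finset.sum_const, Finset.card_univ]
  rw [h2, h4]
  have h5 : (∑ i : Fin (C.n+1), if O.dir (C.edge i) (C.half i) then (1:ZMod 2) else 0)
      + (∑ i : Fin (C.n+1), if O.dir (C.edge i) (C.half i) then (1:ZMod 2) else 0) = 0 := by
    generalize (∑ i : Fin (C.n+1), if O.dir (C.edge i) (C.half i) then (1:ZMod 2) else 0) = a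
    revert a; decide
  linear_combination h5

lemma Circuit.balanced_of_consistent {G : SignedGraph V E} (O : SOrientation G)
    (C : Circuit G) (h : ∀ i, C.ConsistentAt O.dir i) : C.Balanced := by
  have hp := C.parity O
  rw [Finset.sum_congr rfl (fun i _ => if_pos (h i))] at hp
  have h4 : (∑ _i : Fin (C.n+1), (1:ZMod 2)) = ((C.n + 1 : ℕ) : ZMod 2) := by
    simp [Finset.sum_const, Finset.card_univ]
  rw [h4] at hp
  have h3 : ∀ a : ZMod 2, a + a = 0 := by decide
  rw [h3] at hp
  have := (ZMod.natCast_eq_zero_iff ..).mp hp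
  exact (even_iff_two_dvd).mpr this

lemma Circuit.unbalanced_of_faulty {G : SignedGraph V E} (O : SOrientation G)
    (C : Circuit G) (i₀ : Fin (C.n+1)) (h : ∀ i, i ≠ i₀ → C.ConsistentAt O.dir i)
    (h0 : ¬ C.ConsistentAt O.dir i₀) : ¬ C.Balanced := by
  have hp := C.parity O
  have hs : (∑ i : Fin (C.n+1), if C.ConsistentAt O.dir i then (1 : ZMod 2) else 0)
      = ((C.n : ℕ) : ZMod 2) := by
    rw [← Finset.sum_erase_add _ _ (Finset.mem_univ i₀), if_neg h0, add_zero]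
    rw [Finset.sum_congr rfl (fun i hi => if_pos (h i (Finset.ne_of_mem_erase hi)))]
    rw [Finset.sum_const, Finset.card_erase_of_mem (Finset.mem_univ i₀)]
    simp
  rw [hs] at hp
  intro hb
  have hz : (((Finset.univ.filter (fun i => G.sign (C.edge i) = false)).card : ZMod 2)) = 0 := by
    rw [ZMod.natCast_eq_zero_iff]
    exact hb.two_dvd
  rw [hz] at hp
  push_cast at hp
  have h3 : ∀ a : ZMod 2, a + (a + 1) = 1 := by decide
  rw [h3] at hp
  exact zero_ne_one hp

section Walk

variable {V E : Type} [Fintype E] [DecidableEq V]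
variable {G : SignedGraph V E}

/-- The current vertex of a walk state `(edge, arrival half)`. -/
def vOf (G : SignedGraph V E) (p : E × Bool) : V := G.ends p.1 p.2

/-- The direction value of the arrival half of a walk state. -/
def valOf (O : SOrientation G) (p : E × Bool) : Bool := O.dir p.1 p.2

/-- One step of the flow-following walk: `q` departs from the current vertex of
`p` via its half `!q.2`, directed oppositely to the arrival half of `p`. -/
def StepRel (O : SOrientation G) (φ : E → ℤ) (p q : E × Bool) : Prop :=
  G.ends q.1 (!q.2) = vOf G p ∧ O.dir q.1 (!q.2) = (!(valOf O p)) ∧ φ q.1 ≠ 0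

lemma step_exists (O : SOrientation G) (φ : E → ℤ) (hφ : IsFlow O φ)
    (hpos : ∀ e, 0 ≤ φ e) (p : E × Bool) (hp : φ p.1 ≠ 0) :
    ∃ q, StepRel O φ p q := by
  by_contra hcon
  push_neg at hcon
  have hall : ∀ (e : E) (i : Bool), G.ends e i = vOf G p → O.dir e i = !(valOf O p) →
      φ e = 0 := by
    intro e i h1 h2
    by_contra h3
    have := hcon (e, !i)
    rw [StepRel] at this
    simp only [Bool.not_not] at this
    exact this ⟨h1, h2, h3⟩
  have hppos : 0 < φ p.1 := lt_of_le_of_ne (hpos p.1) (Ne.symm hp)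
  have hS : ∀ c : Bool,
      (∑ e : E, ∑ i : Bool, if G.ends e i = vOf G p ∧ O.dir e i = c then φ e else 0)
        = (∑ e : E, ∑ i : Bool,
            if G.ends e i = vOf G p ∧ O.dir e i = true then φ e else 0) := by
    intro c
    cases c
    · exact (hφ (vOf G p)).symm
    · rfl
  have hzero : (∑ e : E, ∑ i : Bool,
      if G.ends e i = vOf G p ∧ O.dir e i = !(valOf O p) then φ e else 0) = 0 := by
    apply Finset.sum_eq_zero
    intro e _
    apply Finset.sum_eq_zero
    intro i _
    split
    · next h => exact hall e i h.1 h.2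
    · rfl
  have hge : φ p.1 ≤ (∑ e : E, ∑ i : Bool,
      if G.ends e i = vOf G p ∧ O.dir e i = valOf O p then φ e else 0) := by
    have hnn : ∀ (e : E) (i : Bool),
        (0:ℤ) ≤ (if G.ends e i = vOf G p ∧ O.dir e i = valOf O p then φ e else 0) := by
      intro e i
      split <;> [exact hpos _; exact le_rfl]
    have hterm : φ p.1 ≤ ∑ i : Bool,
        if G.ends p.1 i = vOf G p ∧ O.dir p.1 i = valOf O p then φ p.1 else 0 := by
      have : (if G.ends p.1 p.2 = vOf G p ∧ O.dir p.1 p.2 = valOf O p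
          then φ p.1 else 0) = φ p.1 := by
        rw [if_pos ⟨rfl, rfl⟩]
      calc φ p.1 = _ := this.symm
        _ ≤ _ := Finset.single_le_sum
          (f := fun i => if G.ends p.1 i = vOf G p ∧ O.dir p.1 i = valOf O p then φ p.1 else 0)
          (fun i _ => by split <;> [exact hpos _; exact le_rfl]) (Finset.mem_univ p.2)
    calc φ p.1 ≤ _ := hterm
      _ ≤ _ := Finset.single_le_sum
          (f := fun e => ∑ i : Bool,
            if G.ends e i = vOf G p ∧ O.dir e i = valOf O p then φ e else 0)
          (fun e _ => Finset.sum_nonneg (fun i _ => hnn e i))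
          (Finset.mem_univ p.1)
  rw [hS (valOf O p), ← hS (!(valOf O p)), hzero] at hge
  omega

/-- The flow-following walk, by choice. -/
noncomputable def walkFn (O : SOrientation G) (φ : E → ℤ) (hφ : IsFlow O φ)
    (hpos : ∀ e, 0 ≤ φ e) (p₀ : {p : E × Bool // φ p.1 ≠ 0}) :
    ℕ → {p : E × Bool // φ p.1 ≠ 0} := fun n =>
  Nat.rec p₀ (fun _ prev =>
    ⟨Classical.choose (step_exists O φ hφ hpos prev.1 prev.2),
      (Classical.choose_spec (step_exists O φ hφ hpos prev.1 prev.2)).2.2⟩) n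

lemma walkFn_step (O : SOrientation G) (φ : E → ℤ) (hφ : IsFlow O φ)
    (hpos : ∀ e, 0 ≤ φ e) (p₀ : {p : E × Bool // φ p.1 ≠ 0}) (n : ℕ) :
    StepRel O φ (walkFn O φ hφ hpos p₀ n).1 (walkFn O φ hφ hpos p₀ (n+1)).1 :=
  Classical.choose_spec (step_exists O φ hφ hpos (walkFn O φ hφ hpos p₀ n).1
    (walkFn O φ hφ hpos p₀ n).2)

end Walk

section Seg

variable {V E : Type} [Fintype E] [DecidableEq V]
variable {G : SignedGraph V E} {O : SOrientation G} {φ : E → ℤ}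
variable (u : ℕ → E × Bool) (L : ℕ)

/-- No two of the edges `(u 1).1, …, (u L).1` along a closed, vertex-injective
step chain coincide. -/
lemma seg_edge_ne (hstep : ∀ k < L, StepRel O φ (u k) (u (k+1)))
    (hclose : vOf G (u L) = vOf G (u 0))
    (hinj : ∀ i < L, ∀ j < L, vOf G (u i) = vOf G (u j) → i = j) :
    ∀ k l, 1 ≤ k → k < l → l ≤ L → (u k).1 ≠ (u l).1 := by
  intro k l hk hkl hl heq
  have hstepk : StepRel O φ (u (k-1)) (u k) := by
    have := hstep (k-1) (by omega)
    rwa [Nat.sub_add_cancel hk] at this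
  have hstepl : StepRel O φ (u (l-1)) (u l) := by
    have := hstep (l-1) (by omega)
    rwa [Nat.sub_add_cancel (by omega)] at this
  have hb : (u k).2 = (u l).2 ∨ (u k).2 = !((u l).2) := by
    cases h1 : (u k).2 <;> cases h2 : (u l).2 <;> simp
  rcases hb with hb | hb
  · -- same arrival halves : current vertices coincide
    have hv : vOf G (u k) = vOf G (u l) := by
      show G.ends (u k).1 (u k).2 = G.ends (u l).1 (u l).2
      rw [heq, hb]
    rcases eq_or_lt_of_le hl with hL | hL
    · subst hL
      have := hinj k (by omega) 0 (by omega) (hv.trans hclose)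
      omega
    · have := hinj k (by omega) l hL hv
      omega
  · -- opposite arrival halves : `u k`'s vertex is `u (l-1)`'s vertex
    have hv : vOf G (u k) = vOf G (u (l-1)) := by
      have h1 : G.ends (u l).1 (!((u l).2)) = vOf G (u (l-1)) := hstepl.1
      show G.ends (u k).1 (u k).2 = _
      rw [heq, hb, h1]
    have hkl1 : k = l - 1 := hinj k (by omega) (l-1) (by omega) hv
    have h2 : O.dir (u l).1 (!((u l).2)) = !(valOf O (u (l-1))) := hstepl.2.1
    rw [← hkl1] at h2
    have h3 : O.dir (u l).1 (!((u l).2)) = valOf O (u k) := by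
      show _ = O.dir (u k).1 (u k).2
      rw [heq, hb]
    rw [h3] at h2
    exact (Bool.eq_not_self _).mp h2

variable (hL : 0 < L)
  (hstep : ∀ k < L, StepRel O φ (u k) (u (k+1)))
  (hclose : vOf G (u L) = vOf G (u 0))
  (hinj : ∀ i < L, ∀ j < L, vOf G (u i) = vOf G (u j) → i = j)

/-- The circuit determined by a closed, vertex-injective step chain. -/
def segCircuit : Circuit G where
  n := L - 1
  vtx i := vOf G (u i)
  edge i := (u ((i:ℕ)+1)).1
  half i := !((u ((i:ℕ)+1)).2)
  vtx_inj := by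
    intro i j h
    have hi : (i:ℕ) < L := by omega
    have hj : (j:ℕ) < L := by omega
    exact Fin.ext (hinj i hi j hj h)
  edge_inj := by
    intro i j h
    have hi : (i:ℕ) + 1 ≤ L := by omega
    have hj : (j:ℕ) + 1 ≤ L := by omega
    by_contra hne
    have hne' : (i:ℕ) + 1 ≠ (j:ℕ) + 1 := by
      intro hc
      exact hne (Fin.ext (by omega))
    rcases lt_or_gt_of_ne hne' with hlt | hlt
    · exact seg_edge_ne u L hstep hclose hinj _ _ (by omega) hlt hj h
    · exact seg_edge_ne u L hstep hclose hinj _ _ (by omega) hlt hi h.symm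
  ends_src := by
    intro i
    exact (hstep i (by omega)).1
  ends_tgt := by
    intro i
    show G.ends (u ((i:ℕ)+1)).1 (!(!((u ((i:ℕ)+1)).2))) = vOf G (u ((i + 1 : Fin (L-1+1)) : ℕ))
    rw [Bool.not_not]
    have hv : ((i + 1 : Fin (L-1+1)) : ℕ) = if i = Fin.last (L-1) then 0 else (i:ℕ)+1 := by
      rw [Fin.val_add_one]
    by_cases hi : i = Fin.last (L-1)
    · rw [hv, if_pos hi]
      have : (i:ℕ) + 1 = L := by
        rw [hi]; simp [Fin.last]; omega
      rw [this]
      exact hclose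
    · rw [hv, if_neg hi]
      rfl

lemma segCircuit_vtx (i : Fin (L-1+1)) :
    (segCircuit u L hL hstep hclose hinj).vtx i = vOf G (u i) := rfl

lemma segCircuit_edge (i : Fin (L-1+1)) :
    (segCircuit u L hL hstep hclose hinj).edge i = (u ((i:ℕ)+1)).1 := rfl

lemma segCircuit_support : ∀ i, φ ((segCircuit u L hL hstep hclose hinj).edge i) ≠ 0 := by
  intro i
  have h : (i:ℕ) < L - 1 + 1 := i.isLt
  exact (hstep i (by omega)).2.2

lemma segCircuit_consistent (i : Fin ((L-1)+1)) (hi : i ≠ Fin.last (L-1)) :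
    (segCircuit u L hL hstep hclose hinj).ConsistentAt O.dir i := by
  have hilt : (i:ℕ) + 1 < L := by
    have h1 : (i:ℕ) < L - 1 := by
      rcases lt_or_eq_of_le (Nat.lt_succ_iff.mp i.isLt) with h | h
      · exact h
      · exact absurd (Fin.ext h) hi
    omega
  show O.dir (u ((i:ℕ)+1)).1 (!(!((u ((i:ℕ)+1)).2)))
      ≠ O.dir (u (((i+1 : Fin (L-1+1)):ℕ)+1)).1 (!((u (((i+1 : Fin (L-1+1)):ℕ)+1)).2))
  have hv : ((i + 1 : Fin (L-1+1)) : ℕ) = (i:ℕ)+1 := by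
    rw [Fin.val_add_one, if_neg]
    intro hc
    rw [hc] at hilt
    simp [Fin.last] at hilt
    omega
  rw [hv, Bool.not_not]
  have h2 : O.dir (u ((i:ℕ)+1+1)).1 (!((u ((i:ℕ)+1+1)).2)) = !(valOf O (u ((i:ℕ)+1))) :=
    (hstep ((i:ℕ)+1) hilt).2.1
  rw [h2]
  exact fun hc => (Bool.eq_not_self _).mp hc

lemma segCircuit_last_iff :
    (segCircuit u L hL hstep hclose hinj).ConsistentAt O.dir (Fin.last (L-1))
      ↔ valOf O (u L) = valOf O (u 0) := by
  have hlast : ((Fin.last (L-1) : Fin (L-1+1)) : ℕ) + 1 = L := by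
    simp [Fin.last]; omega
  have hwrap : ((Fin.last (L-1) + 1 : Fin (L-1+1)) : ℕ) = 0 := by
    rw [Fin.val_add_one, if_pos rfl]
  show (O.dir (u (((Fin.last (L-1) : Fin (L-1+1)) : ℕ)+1)).1
        (!(!((u (((Fin.last (L-1) : Fin (L-1+1)) : ℕ)+1)).2)))
      ≠ O.dir (u (((Fin.last (L-1) + 1 : Fin (L-1+1)):ℕ)+1)).1
        (!((u (((Fin.last (L-1) + 1 : Fin (L-1+1)):ℕ)+1)).2))) ↔ _
  rw [hlast, hwrap, Bool.not_not]
  have h2 : O.dir (u (0+1)).1 (!((u (0+1)).2)) = !(valOf O (u 0)) := (hstep 0 hL).2.1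
  rw [show (0:ℕ)+1 = 1 from rfl] at h2
  rw [h2]
  show valOf O (u L) ≠ !(valOf O (u 0)) ↔ _
  cases hx : valOf O (u L) <;> cases hy : valOf O (u 0) <;> simp

include hL hstep hclose hinj in
/-- A closed step chain whose wrap-around is consistent yields a consistently
directed balanced circuit in the support : contradiction. -/
lemma seg_false (hwrap : valOf O (u L) = valOf O (u 0))
    (hnobal : ¬ ∃ C : Circuit G, C.Balanced ∧ (∀ i, C.ConsistentAt O.dir i) ∧
        ∀ i, φ (C.edge i) ≠ 0) : False := by
  apply hnobal
  refine ⟨segCircuit u L hL hstep hclose hinj, ?_, ?_, segCircuit_support u L hL hstep hclose hinj⟩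
  · apply Circuit.balanced_of_consistent O
    intro i
    by_cases hi : i = Fin.last (L-1)
    · rw [hi]
      exact (segCircuit_last_iff u L hL hstep hclose hinj).mpr hwrap
    · exact segCircuit_consistent u L hL hstep hclose hinj i hi
  · intro i
    by_cases hi : i = Fin.last (L-1)
    · rw [hi]
      exact (segCircuit_last_iff u L hL hstep hclose hinj).mpr hwrap
    · exact segCircuit_consistent u L hL hstep hclose hinj i hi

lemma segCircuit_unbalanced (hwrap : valOf O (u L) ≠ valOf O (u 0)) :
    ¬ (segCircuit u L hL hstep hclose hinj).Balanced := by
  apply Circuit.unbalanced_of_faulty O _ (Fin.last (L-1))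
  · intro i hi
    exact segCircuit_consistent u L hL hstep hclose hinj i hi
  · intro hc
    exact hwrap ((segCircuit_last_iff u L hL hstep hclose hinj).mp hc)

end Seg

end Aux


/-- If a bidirected signed graph carries a nonzero integer flow that is
nonnegative on every edge and whose (nonempty) support contains no
consistently directed balanced circuit, then the support contains a
consistently directed unbalanced bicircuit. -/
theorem exists_consistent_unbalanced_bicircuit {V E : Type} [Fintype E]
    [DecidableEq V] (G : SignedGraph V E) (O : SOrientation G) (φ : E → ℤ)
    (hφ : IsFlow O φ) (hpos : ∀ e, 0 ≤ φ e) (hne : ∃ e, φ e ≠ 0)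
    (hnobal : ¬ ∃ C : Circuit G, C.Balanced ∧ (∀ i, C.ConsistentAt O.dir i) ∧
        ∀ i, φ (C.edge i) ≠ 0) :
    ∃ U : SignedCircuit G, U.IsBicircuit ∧ U.ConsistentlyDirected O.dir ∧
      ∀ e ∈ U.edges, φ e ≠ 0 := by
  classical
  obtain ⟨e₀, he₀⟩ := hne
  let p₀ : {p : E × Bool // φ p.1 ≠ 0} := ⟨(e₀, true), he₀⟩
  let w : ℕ → E × Bool := fun n => (walkFn O φ hφ hpos p₀ n).1
  have hwsup : ∀ n, φ (w n).1 ≠ 0 := fun n => (walkFn O φ hφ hpos p₀ n).2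
  have hstepw : ∀ n, StepRel O φ (w n) (w (n+1)) := fun n => walkFn_step O φ hφ hpos p₀ n
  let v : ℕ → V := fun n => vOf G (w n)
  clear_value w
  -- collisions exist beyond any point
  have hcol : ∀ m : ℕ, ∃ s t, m ≤ s ∧ s < t ∧ v s = v t := by
    intro m
    obtain ⟨a, b, hab, heq⟩ := Finite.exists_ne_map_eq_of_infinite (fun n : ℕ => w (m + n))
    rcases lt_or_gt_of_ne hab with hab' | hab'
    · exact ⟨m + a, m + b, by omega, by omega, congrArg (vOf G) heq⟩
    · exact ⟨m + b, m + a, by omega, by omega, congrArg (vOf G) heq.symm⟩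
  -- phase 1 : first vertex repetition
  have hex1 : ∃ t, ∃ s, s < t ∧ v s = v t := by
    obtain ⟨s, t, _, hst, hveq⟩ := hcol 0
    exact ⟨t, s, hst, hveq⟩
  obtain ⟨s₁, hs₁t, hvs₁⟩ := Nat.find_spec hex1
  set t₁ := Nat.find hex1 with ht₁def
  have claimA : ∀ i j, i < j → j < t₁ → v i ≠ v j := by
    intro i j hij hjt hvij
    exact Nat.find_min hex1 hjt ⟨i, hij, hvij⟩
  have hs₁uniq : ∀ s, s < t₁ → v s = v t₁ → s = s₁ := by
    intro s hs hvs
    by_contra hne'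
    rcases lt_or_gt_of_ne hne' with hlt | hlt
    · exact claimA s s₁ hlt hs₁t (hvs.trans hvs₁.symm)
    · exact claimA s₁ s hlt hs (hvs₁.trans hvs.symm)
  -- phase 2 : first return to previously visited territory
  have hex2 : ∃ T, t₁ < T ∧ ∃ j, s₁ ≤ j ∧ j < T ∧ v j = v T := by
    obtain ⟨s, t, hms, hst, hveq⟩ := hcol (t₁+1)
    exact ⟨t, by omega, s, by omega, hst, hveq⟩
  obtain ⟨hT1, h₀, hh₀1, hh₀2, hvh₀⟩ := Nat.find_spec hex2
  set T := Nat.find hex2 with hTdef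
  -- the key injectivity claim on [s₁, T-1]
  have claim : ∀ i j, s₁ ≤ i → i < j → j ≤ T - 1 → v i = v j → i = s₁ ∧ j = t₁ := by
    intro i j hi hij hjT hvij
    by_cases hjt : j < t₁
    · exact absurd hvij (claimA i j hij hjt)
    rcases eq_or_lt_of_le (not_lt.mp hjt) with hj | hj
    · have hi' : i = s₁ := hs₁uniq i (by omega) (by rw [← hj] at hvij; exact hvij)
      exact ⟨hi', hj.symm⟩
    · exact absurd ⟨hj, i, hi, hij, hvij⟩ (Nat.find_min hex2 (show j < T by omega))
  -- the first circuit as a step chain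
  have hL1 : 0 < t₁ - s₁ := by omega
  have hstep1 : ∀ k < t₁ - s₁, StepRel O φ (w (s₁+k)) (w (s₁+(k+1))) :=
    fun k _ => hstepw (s₁+k)
  have hclose1 : vOf G (w (s₁ + (t₁ - s₁))) = vOf G (w (s₁ + 0)) := by
    rw [show s₁ + (t₁ - s₁) = t₁ by omega]
    exact hvs₁.symm
  have hinj1 : ∀ i < t₁ - s₁, ∀ j < t₁ - s₁,
      vOf G (w (s₁+i)) = vOf G (w (s₁+j)) → i = j := by
    intro i hi j hj hveq
    by_contra hne'
    rcases lt_or_gt_of_ne hne' with hlt | hlt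
    · exact claimA (s₁+i) (s₁+j) (by omega) (by omega) hveq
    · exact claimA (s₁+j) (s₁+i) (by omega) (by omega) hveq.symm
  have faulty₁ : valOf O (w t₁) ≠ valOf O (w s₁) := by
    intro hval
    refine seg_false (fun k => w (s₁+k)) (t₁ - s₁) hL1 hstep1 hclose1 hinj1 ?_ hnobal
    show valOf O (w (s₁ + (t₁ - s₁))) = valOf O (w (s₁ + 0))
    rw [show s₁ + (t₁ - s₁) = t₁ by omega]
    exact hval
  -- normalised hit point h of the second collision
  obtain ⟨h, hh1, hh2, hvh, hhuniq⟩ : ∃ h, s₁ < h ∧ h < T ∧ v h = v T ∧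
      (∀ j, s₁ ≤ j → j < T → v j = v T → (j = h ∨ (j = s₁ ∧ h = t₁))) := by
    by_cases hTs : v T = v s₁
    · refine ⟨t₁, by omega, hT1, hvs₁.symm.trans hTs.symm, ?_⟩
      intro j hj1 hj2 hj3
      by_cases hjt : j < t₁
      · right
        exact ⟨hs₁uniq j hjt ((hj3.trans hTs).trans hvs₁), rfl⟩
      rcases eq_or_lt_of_le (not_lt.mp hjt) with hj | hj
      · exact Or.inl hj.symm
      · have := claim s₁ j (le_refl _) (by omega) (by omega) (hj3.trans hTs).symm
        omega
    · refine ⟨h₀, ?_, hh₀2, hvh₀, ?_⟩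
      · rcases eq_or_lt_of_le hh₀1 with hq | hq
        · exfalso
          apply hTs
          rw [← hq] at hvh₀
          exact hvh₀.symm
        · exact hq
      · intro j hj1 hj2 hj3
        left
        by_contra hne'
        have hvjh : v j = v h₀ := hj3.trans hvh₀.symm
        rcases lt_or_gt_of_ne hne' with hlt | hlt
        · have := claim j h₀ hj1 hlt (by omega) hvjh
          have h1 := this.1
          rw [h1] at hj3
          exact hTs hj3.symm
        · have := claim h₀ j hh₀1 hlt (by omega) hvjh.symm
          have h1 := this.1
          rw [h1] at hvh₀
          exact hTs hvh₀.symm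
  -- global edge distinctness along the walk
  have GE : ∀ k l, s₁ + 1 ≤ k → k < l → l ≤ T → (w k).1 ≠ (w l).1 := by
    intro k l hk hkl hl heq
    have hstepk : StepRel O φ (w (k-1)) (w k) := by
      have := hstepw (k-1); rwa [Nat.sub_add_cancel (by omega)] at this
    have hstepl : StepRel O φ (w (l-1)) (w l) := by
      have := hstepw (l-1); rwa [Nat.sub_add_cancel (by omega)] at this
    have hb : (w k).2 = (w l).2 ∨ (w k).2 = !((w l).2) := by
      cases h1 : (w k).2 <;> cases h2 : (w l).2 <;> simp
    rcases hb with hb | hb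
    · -- equal arrival halves : previous vertices coincide
      have hv1 : v (k-1) = v (l-1) := by
        show vOf G (w (k-1)) = vOf G (w (l-1))
        rw [← hstepk.1, ← hstepl.1, heq, hb]
      have hc := claim (k-1) (l-1) (by omega) (by omega) (by omega) hv1
      have d1 : O.dir (w k).1 (!((w k).2)) = !(valOf O (w (k-1))) := hstepk.2.1
      have d2 : O.dir (w l).1 (!((w l).2)) = !(valOf O (w (l-1))) := hstepl.2.1
      rw [heq, hb] at d1
      rw [d1] at d2
      have h5 : valOf O (w (k-1)) = valOf O (w (l-1)) :=
        bool_not_inj (a := valOf O (w (k-1))) (b := valOf O (w (l-1))) d2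
      rw [hc.1, hc.2] at h5
      exact faulty₁ h5.symm
    · -- opposite arrival halves
      have hv1 : v k = v (l-1) := by
        show G.ends (w k).1 ((w k).2) = vOf G (w (l-1))
        rw [heq, hb, hstepl.1]
      by_cases hkl1 : k = l - 1
      · have d2 : O.dir (w l).1 (!((w l).2)) = !(valOf O (w (l-1))) := hstepl.2.1
        rw [← hkl1, ← heq, ← hb] at d2
        exact (Bool.eq_not_self _).mp d2
      · have hc := claim k (l-1) (by omega) (by omega) (by omega) hv1
        omega
  -- main case split
  by_cases hA : t₁ ≤ h
  · -- Case A : construct the bicircuit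
    have hL2 : 0 < T - h := by omega
    have hstep2 : ∀ k < T - h, StepRel O φ (w (h+k)) (w (h+(k+1))) :=
      fun k _ => hstepw (h+k)
    have hclose2 : vOf G (w (h + (T - h))) = vOf G (w (h + 0)) := by
      rw [show h + (T - h) = T by omega, Nat.add_zero]
      exact hvh.symm
    have hinj2 : ∀ i < T - h, ∀ j < T - h,
        vOf G (w (h+i)) = vOf G (w (h+j)) → i = j := by
      intro i hi j hj hveq
      by_contra hne'
      rcases lt_or_gt_of_ne hne' with hlt | hlt
      · have := (claim (h+i) (h+j) (by omega) (by omega) (by omega) hveq).1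
        omega
      · have := (claim (h+j) (h+i) (by omega) (by omega) (by omega) hveq.symm).1
        omega
    have faulty₂ : valOf O (w T) ≠ valOf O (w h) := by
      intro hval
      refine seg_false (fun k => w (h+k)) (T - h) hL2 hstep2 hclose2 hinj2 ?_ hnobal
      show valOf O (w (h + (T - h))) = valOf O (w (h + 0))
      rw [show h + (T - h) = T by omega, Nat.add_zero]
      exact hval
    -- wrap inequalities in segment form
    have hwrapne₁ : valOf O (w (s₁ + (t₁ - s₁))) ≠ valOf O (w (s₁ + 0)) := by
      rw [show s₁ + (t₁ - s₁) = t₁ by omega, Nat.add_zero]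
      exact faulty₁
    have hwrapne₂ : valOf O (w (h + (T - h))) ≠ valOf O (w (h + 0)) := by
      rw [show h + (T - h) = T by omega, Nat.add_zero]
      exact faulty₂
    set C₁ : Circuit G := segCircuit (fun k => w (s₁+k)) (t₁ - s₁) hL1 hstep1 hclose1 hinj1
      with hC₁def
    set C₂ : Circuit G := segCircuit (fun k => w (h+k)) (T - h) hL2 hstep2 hclose2 hinj2
      with hC₂def
    have hub₁ : ¬ C₁.Balanced :=
      segCircuit_unbalanced (fun k => w (s₁+k)) (t₁ - s₁) hL1 hstep1 hclose1 hinj1 hwrapne₁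
    have hub₂ : ¬ C₂.Balanced :=
      segCircuit_unbalanced (fun k => w (h+k)) (T - h) hL2 hstep2 hclose2 hinj2 hwrapne₂
    have hnc₁ : ¬ C₁.ConsistentAt O.dir (Fin.last (t₁ - s₁ - 1)) := by
      intro hc
      exact hwrapne₁
        ((segCircuit_last_iff (fun k => w (s₁+k)) (t₁ - s₁) hL1 hstep1 hclose1 hinj1).mp hc)
    have hnc₂ : ¬ C₂.ConsistentAt O.dir (Fin.last (T - h - 1)) := by
      intro hc
      exact hwrapne₂
        ((segCircuit_last_iff (fun k => w (h+k)) (T - h) hL2 hstep2 hclose2 hinj2).mp hc)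
    have hcons₁ : ∀ i, i ≠ Fin.last (t₁ - s₁ - 1) → C₁.ConsistentAt O.dir i :=
      segCircuit_consistent (fun k => w (s₁+k)) (t₁ - s₁) hL1 hstep1 hclose1 hinj1
    have hcons₂ : ∀ i, i ≠ Fin.last (T - h - 1) → C₂.ConsistentAt O.dir i :=
      segCircuit_consistent (fun k => w (h+k)) (T - h) hL2 hstep2 hclose2 hinj2
    -- the connecting path
    set P : GPath G :=
      { m := h - t₁
        vtx := fun k => v (t₁ + (k:ℕ))
        edge := fun k => (w (t₁ + (k:ℕ) + 1)).1
        half := fun k => !((w (t₁ + (k:ℕ) + 1)).2)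
        vtx_inj := by
          intro i j hij
          have hi' : (i:ℕ) < h - t₁ + 1 := i.isLt
          have hj' : (j:ℕ) < h - t₁ + 1 := j.isLt
          apply Fin.ext
          by_contra hne'
          rcases lt_or_gt_of_ne hne' with hlt | hlt
          · have := (claim (t₁+(i:ℕ)) (t₁+(j:ℕ)) (by omega) (by omega) (by omega) hij).1
            omega
          · have := (claim (t₁+(j:ℕ)) (t₁+(i:ℕ)) (by omega) (by omega) (by omega) hij.symm).1
            omega
        edge_inj := by
          intro i j hij
          have hi' : (i:ℕ) < h - t₁ := i.isLt
          have hj' : (j:ℕ) < h - t₁ := j.isLt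
          apply Fin.ext
          by_contra hne'
          rcases lt_or_gt_of_ne hne' with hlt | hlt
          · exact GE (t₁+(i:ℕ)+1) (t₁+(j:ℕ)+1) (by omega) (by omega) (by omega) hij
          · exact GE (t₁+(j:ℕ)+1) (t₁+(i:ℕ)+1) (by omega) (by omega) (by omega) hij.symm
        ends_src := fun i => (hstepw (t₁ + (i:ℕ))).1
        ends_tgt := by
          intro i
          show G.ends (w (t₁ + (i:ℕ) + 1)).1 (!(!((w (t₁ + (i:ℕ) + 1)).2))) = _
          rw [Bool.not_not]
          rfl } with hPdef
    have hP0 : P.vtx 0 = v t₁ := by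
      show v (t₁ + ((0 : Fin (h - t₁ + 1)):ℕ)) = v t₁
      rw [Fin.val_zero, Nat.add_zero]
    have hPlast : P.vtx (Fin.last (h - t₁)) = v h := by
      show v (t₁ + ((Fin.last (h - t₁)):ℕ)) = v h
      rw [Fin.val_last, show t₁ + (h - t₁) = h by omega]
    -- index forcing at the junctions
    have hforce₁ : ∀ i : Fin (C₁.n + 1), C₁.vtx (i+1) = v t₁ →
        i = Fin.last (t₁ - s₁ - 1) := by
      intro i hi
      by_contra hne'
      have hv1 : ((i+1 : Fin (C₁.n + 1)) : ℕ) = (i:ℕ)+1 := by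
        rw [Fin.val_add_one]
        exact if_neg hne'
      have hi2 : v (s₁ + ((i:ℕ)+1)) = v t₁ := by
        rw [← hv1]
        exact hi
      have hlt : (i:ℕ) < t₁ - s₁ - 1 := by
        have h9 := i.isLt
        rcases lt_or_eq_of_le (Nat.lt_succ_iff.mp h9) with hq | hq
        · exact hq
        · exact absurd (Fin.ext (hq.trans (Fin.val_last _).symm)) hne'
      have := (claim s₁ (s₁ + ((i:ℕ)+1)) (le_refl _) (by omega) (by omega)
        (hvs₁.trans hi2.symm)).2
      omega
    have hforce₂ : ∀ i : Fin (C₂.n + 1), C₂.vtx (i+1) = v h →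
        i = Fin.last (T - h - 1) := by
      intro i hi
      by_contra hne'
      have hv1 : ((i+1 : Fin (C₂.n + 1)) : ℕ) = (i:ℕ)+1 := by
        rw [Fin.val_add_one]
        exact if_neg hne'
      have hi2 : v (h + ((i:ℕ)+1)) = v h := by
        rw [← hv1]
        exact hi
      have hlt : (i:ℕ) < T - h - 1 := by
        have h9 := i.isLt
        rcases lt_or_eq_of_le (Nat.lt_succ_iff.mp h9) with hq | hq
        · exact hq
        · exact absurd (Fin.ext (hq.trans (Fin.val_last _).symm)) hne'
      have := (claim h (h + ((i:ℕ)+1)) (by omega) (by omega) (by omega) hi2.symm).1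
      omega
    -- edge normal forms at the junctions
    have hE₁last : C₁.edge (Fin.last (t₁ - s₁ - 1)) = (w t₁).1 := by
      show (w (s₁ + ((Fin.last (t₁ - s₁ - 1) : Fin (t₁ - s₁ - 1 + 1)):ℕ) + 1)).1 = (w t₁).1
      rw [Fin.val_last, show s₁ + (t₁ - s₁ - 1) + 1 = t₁ by omega]
    have hH₁last : C₁.half (Fin.last (t₁ - s₁ - 1)) = !((w t₁).2) := by
      show (!((w (s₁ + ((Fin.last (t₁ - s₁ - 1) : Fin (t₁ - s₁ - 1 + 1)):ℕ) + 1)).2)) = (!((w t₁).2))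
      rw [Fin.val_last, show s₁ + (t₁ - s₁ - 1) + 1 = t₁ by omega]
    have hE₂last : C₂.edge (Fin.last (T - h - 1)) = (w T).1 := by
      show (w (h + ((Fin.last (T - h - 1) : Fin (T - h - 1 + 1)):ℕ) + 1)).1 = (w T).1
      rw [Fin.val_last, show h + (T - h - 1) + 1 = T by omega]
    have hH₂last : C₂.half (Fin.last (T - h - 1)) = !((w T).2) := by
      show (!((w (h + ((Fin.last (T - h - 1) : Fin (T - h - 1 + 1)):ℕ) + 1)).2)) = (!((w T).2))
      rw [Fin.val_last, show h + (T - h - 1) + 1 = T by omega]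
    refine ⟨SignedCircuit.bicircuit C₁ C₂ P hub₁ hub₂ ?_ ?_ ?_ ?_ ?_ ?_ ?_,
      trivial, ⟨?_, ?_, ?_, ?_, ?_, ?_, ?_, ?_⟩, ?_⟩
    · -- hstart
      refine ⟨0, ?_⟩
      show v (s₁ + ((0 : Fin (t₁ - s₁ - 1 + 1)):ℕ)) = P.vtx 0
      rw [Fin.val_zero, Nat.add_zero, hP0]
      exact hvs₁
    · -- hend
      refine ⟨0, ?_⟩
      show v (h + ((0 : Fin (T - h - 1 + 1)):ℕ)) = P.vtx (Fin.last (h - t₁))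
      rw [Fin.val_zero, Nat.add_zero, hPlast]
    · -- hmeet
      rintro x ⟨i, hi⟩ ⟨j, hj⟩
      have hi' : (i:ℕ) < t₁ - s₁ - 1 + 1 := i.isLt
      have hj' : (j:ℕ) < T - h - 1 + 1 := j.isLt
      have hv9 : v (s₁ + (i:ℕ)) = v (h + (j:ℕ)) := hi.trans hj.symm
      have h9 := claim (s₁ + (i:ℕ)) (h + (j:ℕ)) (by omega) (by omega) (by omega) hv9
      constructor
      · show h - t₁ = 0
        omega
      · rw [← hi, hP0]
        show v (s₁ + (i:ℕ)) = v t₁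
        rw [show s₁ + (i:ℕ) = s₁ by omega]
        exact hvs₁
    · -- hpathint
      intro k hk0 hklast
      have hk0' : (k:ℕ) ≠ 0 := by
        intro hc
        exact hk0 (Fin.ext (by rw [hc, Fin.val_zero]))
      have hklast' : (k:ℕ) ≠ h - t₁ := by
        intro hc
        exact hklast (Fin.ext (by rw [hc, Fin.val_last]))
      have hk' : (k:ℕ) < h - t₁ + 1 := k.isLt
      constructor
      · rintro ⟨i, hi⟩
        have hi' : (i:ℕ) < t₁ - s₁ - 1 + 1 := i.isLt
        have h9 := (claim (s₁ + (i:ℕ)) (t₁ + (k:ℕ)) (by omega) (by omega) (by omega) hi).2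
        omega
      · rintro ⟨j, hj⟩
        have hj' : (j:ℕ) < T - h - 1 + 1 := j.isLt
        have h9 := (claim (t₁ + (k:ℕ)) (h + (j:ℕ)) (by omega) (by omega) (by omega)
          hj.symm).1
        omega
    · -- hedisj
      intro a b
      have ha' : (a:ℕ) < t₁ - s₁ - 1 + 1 := a.isLt
      have hb' : (b:ℕ) < T - h - 1 + 1 := b.isLt
      show (w (s₁ + (a:ℕ) + 1)).1 ≠ (w (h + (b:ℕ) + 1)).1
      exact GE (s₁ + (a:ℕ) + 1) (h + (b:ℕ) + 1) (by omega) (by omega) (by omega)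
    · -- hpe₁
      intro a b
      have ha' : (a:ℕ) < h - t₁ := a.isLt
      have hb' : (b:ℕ) < t₁ - s₁ - 1 + 1 := b.isLt
      show (w (t₁ + (a:ℕ) + 1)).1 ≠ (w (s₁ + (b:ℕ) + 1)).1
      exact (GE (s₁ + (b:ℕ) + 1) (t₁ + (a:ℕ) + 1) (by omega) (by omega) (by omega)).symm
    · -- hpe₂
      intro a b
      have ha' : (a:ℕ) < h - t₁ := a.isLt
      have hb' : (b:ℕ) < T - h - 1 + 1 := b.isLt
      show (w (t₁ + (a:ℕ) + 1)).1 ≠ (w (h + (b:ℕ) + 1)).1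
      exact GE (t₁ + (a:ℕ) + 1) (h + (b:ℕ) + 1) (by omega) (by omega) (by omega)
    · -- consistency away from the C₁-junction
      intro i hne'
      apply hcons₁ i
      intro hlast
      apply hne'
      have hz : (@HAdd.hAdd (Fin (C₁.n+1)) (Fin (C₁.n+1)) (Fin (C₁.n+1)) _
          (Fin.last (t₁ - s₁ - 1)) 1) = 0 := Fin.last_add_one _
      rw [hlast, hz, hP0]
      show v (s₁ + ((0 : Fin (t₁ - s₁ - 1 + 1)):ℕ)) = v t₁
      rw [Fin.val_zero, Nat.add_zero]
      exact hvs₁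
    · -- faultiness at the C₁-junction
      intro i heq
      rw [hforce₁ i (heq.trans hP0)]
      exact hnc₁
    · -- consistency away from the C₂-junction
      intro i hne'
      apply hcons₂ i
      intro hlast
      apply hne'
      have hz : (@HAdd.hAdd (Fin (C₂.n+1)) (Fin (C₂.n+1)) (Fin (C₂.n+1)) _
          (Fin.last (T - h - 1)) 1) = 0 := Fin.last_add_one _
      rw [hlast, hz, hPlast]
      show v (h + ((0 : Fin (T - h - 1 + 1)):ℕ)) = v h
      rw [Fin.val_zero, Nat.add_zero]
    · -- faultiness at the C₂-junction
      intro i heq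
      rw [hforce₂ i (heq.trans hPlast)]
      exact hnc₂
    · -- the path is consistently directed
      intro a b hab
      show O.dir (w (t₁ + (a:ℕ) + 1)).1 (!(!((w (t₁ + (a:ℕ) + 1)).2)))
        ≠ O.dir (w (t₁ + (b:ℕ) + 1)).1 (!((w (t₁ + (b:ℕ) + 1)).2))
      rw [Bool.not_not, show t₁ + (b:ℕ) + 1 = (t₁ + (a:ℕ) + 1) + 1 by omega,
        (hstepw (t₁ + (a:ℕ) + 1)).2.1]
      exact fun hc => (Bool.eq_not_self _).mp hc
    · -- junction of the path with C₁
      intro k hk j hj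
      rw [hforce₁ j (hj.trans hP0), hE₁last, hH₁last, Bool.not_not]
      show O.dir (w (t₁ + (k:ℕ) + 1)).1 (!((w (t₁ + (k:ℕ) + 1)).2)) ≠ O.dir (w t₁).1 ((w t₁).2)
      rw [hk, Nat.add_zero, (hstepw t₁).2.1]
      exact fun hc => (Bool.eq_not_self _).mp hc.symm
    · -- junction of the path with C₂
      intro k hk j hj
      have hk' : (k:ℕ) + 1 = h - t₁ := hk
      rw [hforce₂ j (hj.trans hPlast), hE₂last, hH₂last]
      show O.dir (w (t₁ + (k:ℕ) + 1)).1 (!(!((w (t₁ + (k:ℕ) + 1)).2)))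
        ≠ O.dir (w T).1 (!(!((w T).2)))
      rw [Bool.not_not, Bool.not_not, show t₁ + (k:ℕ) + 1 = h by omega]
      exact fun hc => faulty₂ hc.symm
    · -- trivial path : junction of the two circuits
      intro hm j₁ j₂ hj₁ hj₂
      have hht : h = t₁ := by
        have : h - t₁ = 0 := hm
        omega
      have hvth : v t₁ = v h := by rw [hht]
      rw [hforce₁ j₁ (hj₁.trans hP0), hforce₂ j₂ ((hj₂.trans hP0).trans hvth),
        hE₁last, hH₁last, hE₂last, hH₂last, Bool.not_not, Bool.not_not]
      show O.dir (w t₁).1 ((w t₁).2) ≠ O.dir (w T).1 ((w T).2)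
      intro hc
      apply faulty₂
      rw [hht]
      exact hc.symm
    · -- support
      intro e he
      rcases he with (⟨i, hi⟩ | ⟨i, hi⟩) | ⟨i, hi⟩
      · rw [← hi]
        show φ ((w (s₁ + (i:ℕ) + 1)).1) ≠ 0
        exact hwsup _
      · rw [← hi]
        show φ ((w (h + (i:ℕ) + 1)).1) ≠ 0
        exact hwsup _
      · rw [← hi]
        show φ ((w (t₁ + (i:ℕ) + 1)).1) ≠ 0
        exact hwsup _
  · -- Case B : the walk returns to the interior of the first circuit; contradiction
    push_neg at hA
    exfalso
    by_cases hval : valOf O (w T) = valOf O (w h)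
    · -- splice the path with the forward arc of the first circuit
      set u' : ℕ → E × Bool := fun k =>
        if k ≤ T - t₁ then w (t₁+k) else w (h + (k - (T - t₁))) with hu'def
      set L' : ℕ := (T - t₁) + (t₁ - h) with hL'def
      have hL' : 0 < L' := by omega
      have e0 : u' 0 = w t₁ := by
        rw [hu'def]
        simp only [if_pos (by omega : (0:ℕ) ≤ T - t₁)]
        rw [Nat.add_zero]
      have eL : u' L' = w t₁ := by
        rw [hu'def, hL'def]
        simp only [if_neg (by omega : ¬ (T - t₁) + (t₁ - h) ≤ T - t₁)]
        rw [show (T - t₁) + (t₁ - h) - (T - t₁) = t₁ - h by omega,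
          show h + (t₁ - h) = t₁ by omega]
      have hstep' : ∀ k < L', StepRel O φ (u' k) (u' (k+1)) := by
        intro k hk
        by_cases h1 : k + 1 ≤ T - t₁
        · have e1 : u' k = w (t₁+k) := by rw [hu'def]; simp only [if_pos (by omega : k ≤ T - t₁)]
          have e2 : u' (k+1) = w (t₁+(k+1)) := by rw [hu'def]; simp only [if_pos h1]
          rw [e1, e2]
          exact hstepw (t₁+k)
        · by_cases h2 : k ≤ T - t₁
          · have e1 : u' k = w T := by
              rw [hu'def]
              simp only [if_pos h2]
              rw [show t₁ + k = T by omega]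
            have e2 : u' (k+1) = w (h+1) := by
              rw [hu'def]
              simp only [if_neg (by omega : ¬ k + 1 ≤ T - t₁)]
              rw [show k + 1 - (T - t₁) = 1 by omega]
            rw [e1, e2]
            refine ⟨?_, ?_, hwsup (h+1)⟩
            · rw [(hstepw h).1]
              exact hvh
            · rw [(hstepw h).2.1, hval]
          · have e1 : u' k = w (h + (k - (T - t₁))) := by
              rw [hu'def]; simp only [if_neg h2]
            have e2 : u' (k+1) = w ((h + (k - (T - t₁))) + 1) := by
              rw [hu'def]
              simp only [if_neg (by omega : ¬ k + 1 ≤ T - t₁)]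
              rw [show k + 1 - (T - t₁) = (k - (T - t₁)) + 1 by omega,
                show h + ((k - (T - t₁)) + 1) = (h + (k - (T - t₁))) + 1 by omega]
            rw [e1, e2]
            exact hstepw _
      have hclose' : vOf G (u' L') = vOf G (u' 0) := by rw [e0, eL]
      have hveq : ∀ k, k < L' →
          vOf G (u' k) = v (if k < T - t₁ then t₁ + k else h + (k - (T - t₁))) := by
        intro k hk
        by_cases h1 : k < T - t₁
        · rw [if_pos h1, hu'def]
          simp only [if_pos (by omega : k ≤ T - t₁)]
          rfl
        · rw [if_neg h1]
          by_cases h2 : k ≤ T - t₁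
          · have e1 : u' k = w T := by
              rw [hu'def]
              simp only [if_pos h2]
              rw [show t₁ + k = T by omega]
            rw [e1, show k - (T - t₁) = 0 by omega]
            exact hvh.symm
          · rw [hu'def]
            simp only [if_neg h2]
            rfl
      have hinj' : ∀ i < L', ∀ j < L', vOf G (u' i) = vOf G (u' j) → i = j := by
        intro i hi j hj hveqij
        rw [hveq i hi, hveq j hj] at hveqij
        set a := (if i < T - t₁ then t₁ + i else h + (i - (T - t₁))) with hadef
        set b := (if j < T - t₁ then t₁ + j else h + (j - (T - t₁))) with hbdef
        have hba : s₁ < a ∧ a ≤ T - 1 := by rw [hadef]; split <;> omega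
        have hbb : s₁ < b ∧ b ≤ T - 1 := by rw [hbdef]; split <;> omega
        rcases lt_trichotomy a b with hab | hab | hab
        · have := (claim a b (by omega) hab (by omega) hveqij).1
          omega
        · rw [hadef, hbdef] at hab
          split_ifs at hab <;> omega
        · have := (claim b a (by omega) hab (by omega) hveqij.symm).1
          omega
      have hwrap' : valOf O (u' L') = valOf O (u' 0) := by rw [e0, eL]
      exact seg_false u' L' hL' hstep' hclose' hinj' hwrap' hnobal
    · -- splice the path with the reversed arc of the first circuit
      set u' : ℕ → E × Bool := fun k =>
        if k ≤ T - t₁ then w (t₁+k)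
        else ((w (h - (k - (T - t₁)) + 1)).1, !((w (h - (k - (T - t₁)) + 1)).2)) with hu'def
      set L' : ℕ := (T - t₁) + (h - s₁) with hL'def
      have hL' : 0 < L' := by omega
      have e0 : u' 0 = w t₁ := by
        rw [hu'def]
        simp only [if_pos (by omega : (0:ℕ) ≤ T - t₁)]
        rw [Nat.add_zero]
      have eL : u' L' = ((w (s₁+1)).1, !((w (s₁+1)).2)) := by
        rw [hu'def, hL'def]
        simp only [if_neg (by omega : ¬ (T - t₁) + (h - s₁) ≤ T - t₁)]
        rw [show (T - t₁) + (h - s₁) - (T - t₁) = h - s₁ by omega,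
          show h - (h - s₁) = s₁ by omega]
      have hstep' : ∀ k < L', StepRel O φ (u' k) (u' (k+1)) := by
        intro k hk
        by_cases h1 : k + 1 ≤ T - t₁
        · have e1 : u' k = w (t₁+k) := by rw [hu'def]; simp only [if_pos (by omega : k ≤ T - t₁)]
          have e2 : u' (k+1) = w (t₁+(k+1)) := by rw [hu'def]; simp only [if_pos h1]
          rw [e1, e2]
          exact hstepw (t₁+k)
        · by_cases h2 : k ≤ T - t₁
          · have e1 : u' k = w T := by
              rw [hu'def]
              simp only [if_pos h2]
              rw [show t₁ + k = T by omega]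
            have e2 : u' (k+1) = ((w h).1, !((w h).2)) := by
              rw [hu'def]
              simp only [if_neg (by omega : ¬ k + 1 ≤ T - t₁)]
              rw [show k + 1 - (T - t₁) = 1 by omega, show h - 1 + 1 = h by omega]
            rw [e1, e2]
            refine ⟨?_, ?_, hwsup h⟩
            · show G.ends (w h).1 (!(!((w h).2))) = vOf G (w T)
              rw [Bool.not_not]
              exact hvh
            · show O.dir (w h).1 (!(!((w h).2))) = !(valOf O (w T))
              rw [Bool.not_not]
              exact bool_eq_not_of_ne (fun hc => hval hc.symm)
          · have hr : s₁ + 1 ≤ h - (k - (T - t₁)) ∧ h - (k - (T - t₁)) ≤ h - 1 := by omega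
            set r := h - (k - (T - t₁)) with hrdef
            have e1 : u' k = ((w (r+1)).1, !((w (r+1)).2)) := by
              rw [hu'def]; simp only [if_neg h2]
              rfl
            have e2 : u' (k+1) = ((w r).1, !((w r).2)) := by
              rw [hu'def]
              simp only [if_neg (by omega : ¬ k + 1 ≤ T - t₁)]
              rw [show h - (k + 1 - (T - t₁)) + 1 = r by omega]
            rw [e1, e2]
            refine ⟨?_, ?_, hwsup r⟩
            · show G.ends (w r).1 (!(!((w r).2))) = G.ends (w (r+1)).1 (!((w (r+1)).2))
              rw [Bool.not_not, (hstepw r).1]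
              rfl
            · show O.dir (w r).1 (!(!((w r).2))) = !(O.dir (w (r+1)).1 (!((w (r+1)).2)))
              rw [Bool.not_not, (hstepw r).2.1, Bool.not_not]
              rfl
      have hclose' : vOf G (u' L') = vOf G (u' 0) := by
        rw [e0, eL]
        show G.ends (w (s₁+1)).1 (!((w (s₁+1)).2)) = vOf G (w t₁)
        rw [(hstepw s₁).1]
        exact hvs₁
      have hveq : ∀ k, k < L' →
          vOf G (u' k) = v (if k < T - t₁ then t₁ + k else h - (k - (T - t₁))) := by
        intro k hk
        by_cases h1 : k < T - t₁
        · rw [if_pos h1, hu'def]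
          simp only [if_pos (by omega : k ≤ T - t₁)]
          rfl
        · rw [if_neg h1]
          by_cases h2 : k ≤ T - t₁
          · have e1 : u' k = w T := by
              rw [hu'def]
              simp only [if_pos h2]
              rw [show t₁ + k = T by omega]
            rw [e1, show h - (k - (T - t₁)) = h by omega]
            exact hvh.symm
          · have e1 : u' k = ((w (h - (k - (T - t₁)) + 1)).1, !((w (h - (k - (T - t₁)) + 1)).2)) := by
              rw [hu'def]; simp only [if_neg h2]
            rw [e1]
            show G.ends (w (h - (k - (T - t₁)) + 1)).1 (!((w (h - (k - (T - t₁)) + 1)).2)) = _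
            rw [(hstepw (h - (k - (T - t₁)))).1]
      have hinj' : ∀ i < L', ∀ j < L', vOf G (u' i) = vOf G (u' j) → i = j := by
        intro i hi j hj hveqij
        rw [hveq i hi, hveq j hj] at hveqij
        set a := (if i < T - t₁ then t₁ + i else h - (i - (T - t₁))) with hadef
        set b := (if j < T - t₁ then t₁ + j else h - (j - (T - t₁))) with hbdef
        have hba : s₁ < a ∧ a ≤ T - 1 := by rw [hadef]; split <;> omega
        have hbb : s₁ < b ∧ b ≤ T - 1 := by rw [hbdef]; split <;> omega
        rcases lt_trichotomy a b with hab | hab | hab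
        · have := (claim a b (by omega) hab (by omega) hveqij).1
          omega
        · rw [hadef, hbdef] at hab
          split_ifs at hab <;> omega
        · have := (claim b a (by omega) hab (by omega) hveqij.symm).1
          omega
      have hwrap' : valOf O (u' L') = valOf O (u' 0) := by
        rw [e0, eL]
        show O.dir (w (s₁+1)).1 (!((w (s₁+1)).2)) = valOf O (w t₁)
        rw [(hstepw s₁).2.1]
        exact (bool_eq_not_of_ne faulty₁).symm
      exact seg_false u' L' hL' hstep' hclose' hinj' hwrap' hnobal
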